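/- If a nonnegative kernel Q from E to F satisfies sup_{x,y∈E} Q(1)(x)/Q(1)(y) ≤ κ for some κ ∈ [1,∞), where Q(1)(x) := Q(x,F) > 0, then for the normalized kernel P(x,dy) := Q(x,dy)/Q(1)(x) and any probability measures μ, ρ on E, the normalized updates μQ/μQ(1) and ρQ/ρQ(1) satisfy ‖μQ/μ(Q(1)) − ρQ/ρ(Q(1))‖_tv ≤ β(P) · (osc(Q(1))/(μ(Q(1)) ∧ ρ(Q(1)))) · ‖μ−ρ‖_tv, where β(P) is the Dobrushin coefficient of P and osc(f) = sup f + sup_{x,y}|f(x)−f(y)|. -/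

import Mathlib

/-!
Write `f = Q(1)` and, for a measurable set `A`, `g = P(·, A)`, so that both normalized updates
evaluated at `A` are ratios `ν(f g)/ν(f)`, and `|g x - g y| ≤ β(P)`. Centering at
`c = ρ(f g)/ρ(f)`, a weighted mean of `g` and hence within `β(P)` of every value of `g`, the
function `φ = f (g - c)` has `ρ(φ) = 0`, so the difference of the ratios is
`(μ(φ) - ρ(φ))/μ(f)`. The identity `φ x - φ y = f x (g x - g y) + (g y - c) (f x - f y)` bounds
the oscillation of `φ` by `β(P) (sup f + osc f)`, and by the Hahn decomposition of `μ - ρ`,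
`|μ(φ) - ρ(φ)| ≤ osc(φ) ‖μ - ρ‖_tv`.
-/

open MeasureTheory ProbabilityTheory

/-- Total variation distance as the supremum over measurable sets. -/
noncomputable def tvDist {E : Type*} [MeasurableSpace E] (μ ρ : Measure E) : ℝ :=
  ⨆ A : {s : Set E // MeasurableSet s}, |(μ A).toReal - (ρ A).toReal|

section

variable {α : Type*} [MeasurableSpace α]

lemma tvDist_le {μ ρ : Measure α} {C : ℝ}
    (h : ∀ s, MeasurableSet s → |(μ s).toReal - (ρ s).toReal| ≤ C) : tvDist μ ρ ≤ C :=
  have : Nonempty {s : Set α // MeasurableSet s} := ⟨⟨∅, .empty⟩⟩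
  ciSup_le fun s => h s.1 s.2

lemma abs_sub_le_tvDist (μ ρ : Measure α) [IsFiniteMeasure μ] [IsFiniteMeasure ρ]
    {s : Set α} (hs : MeasurableSet s) : |(μ s).toReal - (ρ s).toReal| ≤ tvDist μ ρ := by
  refine le_ciSup (f := fun s : {s : Set α // MeasurableSet s} => |(μ s).toReal - (ρ s).toReal|)
    ⟨μ.real .univ + ρ.real .univ, ?_⟩ ⟨s, hs⟩
  rintro _ ⟨t, rfl⟩
  exact abs_sub_le_of_nonneg_of_le ENNReal.toReal_nonneg
    ((measureReal_mono (Set.subset_univ _)).trans (le_add_of_nonneg_right measureReal_nonneg))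
    ENNReal.toReal_nonneg
    ((measureReal_mono (Set.subset_univ _)).trans (le_add_of_nonneg_left measureReal_nonneg))

lemma tvDist_nonneg (μ ρ : Measure α) [IsFiniteMeasure μ] [IsFiniteMeasure ρ] :
    0 ≤ tvDist μ ρ :=
  (abs_nonneg _).trans (abs_sub_le_tvDist μ ρ .empty)

lemma tvDist_comm (μ ρ : Measure α) : tvDist μ ρ = tvDist ρ μ := by
  simp only [tvDist, abs_sub_comm]

lemma tvDist_le_one (μ ρ : Measure α) [IsProbabilityMeasure μ] [IsProbabilityMeasure ρ] :
    tvDist μ ρ ≤ 1 :=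
  tvDist_le fun _ _ => abs_sub_le_of_nonneg_of_le ENNReal.toReal_nonneg measureReal_le_one
    ENNReal.toReal_nonneg measureReal_le_one

lemma abs_sub_le_iSup_tvDist {ι : Type*} (P : ι → Measure α) [∀ i, IsProbabilityMeasure (P i)]
    {s : Set α} (hs : MeasurableSet s) (i j : ι) :
    |(P i s).toReal - (P j s).toReal| ≤ ⨆ p : ι × ι, tvDist (P p.1) (P p.2) :=
  (abs_sub_le_tvDist (P i) (P j) hs).trans <|
    le_ciSup (f := fun p : ι × ι => tvDist (P p.1) (P p.2))
      ⟨1, Set.forall_mem_range.2 fun p => tvDist_le_one (P p.1) (P p.2)⟩ (i, j)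

lemma exists_add_eq_add_measureReal_le_tvDist (μ ρ : Measure α) [IsFiniteMeasure μ]
    [IsFiniteMeasure ρ] :
    ∃ ν₁ ν₂ : Measure α, ν₁ ≤ μ ∧ ν₂ ≤ ρ ∧ μ + ν₂ = ρ + ν₁ ∧ ν₁.real .univ ≤ tvDist μ ρ := by
  obtain ⟨s, hs, hρμ, hμρ⟩ := hahn_decomposition μ ρ
  have hle_s : ρ.restrict s ≤ μ.restrict s := Measure.le_iff.2 fun t ht => by
    simpa only [Measure.restrict_apply ht] using hρμ _ (ht.inter hs) Set.inter_subset_right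
  have hle_sc : μ.restrict sᶜ ≤ ρ.restrict sᶜ := Measure.le_iff.2 fun t ht => by
    simpa only [Measure.restrict_apply ht] using hμρ _ (ht.inter hs.compl) Set.inter_subset_right
  have hν₁ := Measure.sub_add_cancel_of_le hle_s
  have hν₂ := Measure.sub_add_cancel_of_le hle_sc
  have hmass : (μ.restrict s - ρ.restrict s).real .univ ≤ tvDist μ ρ := by
    rw [measureReal_def, Measure.sub_apply .univ hle_s, Measure.restrict_apply_univ,
      Measure.restrict_apply_univ, ENNReal.toReal_sub_of_le (hρμ s hs le_rfl) (measure_ne_top _ _)]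
    exact (le_abs_self _).trans (abs_sub_le_tvDist μ ρ hs)
  refine ⟨_, ρ.restrict sᶜ - μ.restrict sᶜ, Measure.sub_le.trans Measure.restrict_le_self,
    Measure.sub_le.trans Measure.restrict_le_self, ?_, hmass⟩
  generalize μ.restrict s - ρ.restrict s = ν₁ at hν₁
  generalize ρ.restrict sᶜ - μ.restrict sᶜ = ν₂ at hν₂
  calc μ + ν₂ = μ.restrict s + μ.restrict sᶜ + ν₂ := by rw [μ.restrict_add_restrict_compl hs]
    _ = μ.restrict s + (ν₂ + μ.restrict sᶜ) := by abel
    _ = ρ.restrict sᶜ + (ν₁ + ρ.restrict s) := by rw [hν₁, hν₂, add_comm]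
    _ = ρ.restrict s + ρ.restrict sᶜ + ν₁ := by abel
    _ = ρ + ν₁ := by rw [ρ.restrict_add_restrict_compl hs]

lemma integral_sub_integral_le_of_sub_le {ν₁ ν₂ : Measure α} [IsFiniteMeasure ν₁]
    [IsFiniteMeasure ν₂] (hmass : ν₁.real .univ = ν₂.real .univ) {φ : α → ℝ}
    (h₁ : Integrable φ ν₁) (h₂ : Integrable φ ν₂) {M : ℝ} (hφ : ∀ x y, φ x - φ y ≤ M) :
    ∫ x, φ x ∂ν₁ - ∫ x, φ x ∂ν₂ ≤ M * ν₁.real .univ := by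
  set t := ν₁.real .univ
  rcases measureReal_nonneg.eq_or_lt with ht | ht
  · have h₁0 : ν₁ = 0 := Measure.measure_univ_eq_zero.1 ((measureReal_eq_zero_iff).1 ht.symm)
    have h₂0 : ν₂ = 0 :=
      Measure.measure_univ_eq_zero.1 ((measureReal_eq_zero_iff).1 (ht.trans hmass).symm)
    simp [h₁0, h₂0, t]
  have hy : ∀ y, ∫ x, φ x ∂ν₁ ≤ t * (φ y + M) := fun y =>
    calc ∫ x, φ x ∂ν₁ ≤ ∫ _, φ y + M ∂ν₁ :=
          integral_mono h₁ (integrable_const _) fun x => by linarith [hφ x y]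
      _ = t * (φ y + M) := by rw [integral_const, smul_eq_mul]
  have key : t * ∫ x, φ x ∂ν₁ ≤ t * (∫ x, φ x ∂ν₂ + M * t) :=
    calc t * ∫ x, φ x ∂ν₁ = ∫ _, ∫ x, φ x ∂ν₁ ∂ν₂ := by rw [integral_const, smul_eq_mul, hmass]
      _ ≤ ∫ y, t * (φ y + M) ∂ν₂ :=
          integral_mono (integrable_const _) ((h₂.add (integrable_const M)).const_mul t) hy
      _ = t * (∫ x, φ x ∂ν₂ + M * t) := by
          rw [integral_const_mul, integral_add h₂ (integrable_const M), integral_const,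
            smul_eq_mul, ← hmass, mul_comm t M]
  linarith [le_of_mul_le_mul_left key ht]

lemma integral_sub_integral_le_mul_tvDist {μ ρ : Measure α} [IsProbabilityMeasure μ]
    [IsProbabilityMeasure ρ] {φ : α → ℝ} (hμ : Integrable φ μ) (hρ : Integrable φ ρ) {M : ℝ}
    (hφ : ∀ x y, φ x - φ y ≤ M) :
    ∫ x, φ x ∂μ - ∫ x, φ x ∂ρ ≤ M * tvDist μ ρ := by
  obtain ⟨ν₁, ν₂, hν₁μ, hν₂ρ, hadd, hν₁⟩ := exists_add_eq_add_measureReal_le_tvDist μ ρ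
  have := isFiniteMeasure_of_le μ hν₁μ
  have := isFiniteMeasure_of_le ρ hν₂ρ
  have hmass : ν₁.real .univ = ν₂.real .univ := by
    have h : (μ + ν₂).real .univ = (ρ + ν₁).real .univ := by rw [hadd]
    rw [measureReal_add_apply, measureReal_add_apply, probReal_univ (μ := μ),
      probReal_univ (μ := ρ)] at h
    linarith
  have hsplit : ∫ x, φ x ∂μ - ∫ x, φ x ∂ρ = ∫ x, φ x ∂ν₁ - ∫ x, φ x ∂ν₂ := by
    have h := integral_add_measure hμ (hρ.mono_measure hν₂ρ)
    rw [hadd, integral_add_measure hρ (hμ.mono_measure hν₁μ)] at h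
    linarith
  have hM : 0 ≤ M := by
    obtain ⟨x⟩ := nonempty_of_isProbabilityMeasure μ
    simpa using hφ x x
  rw [hsplit]
  exact (integral_sub_integral_le_of_sub_le hmass (hμ.mono_measure hν₁μ)
    (hρ.mono_measure hν₂ρ) hφ).trans (mul_le_mul_of_nonneg_left hν₁ hM)

lemma abs_integral_sub_integral_le_mul_tvDist {μ ρ : Measure α} [IsProbabilityMeasure μ]
    [IsProbabilityMeasure ρ] {φ : α → ℝ} (hμ : Integrable φ μ) (hρ : Integrable φ ρ) {M : ℝ}
    (hφ : ∀ x y, φ x - φ y ≤ M) :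
    |∫ x, φ x ∂μ - ∫ x, φ x ∂ρ| ≤ M * tvDist μ ρ := by
  have h := integral_sub_integral_le_mul_tvDist hρ hμ hφ
  rw [tvDist_comm] at h
  exact abs_sub_le_iff.2 ⟨integral_sub_integral_le_mul_tvDist hμ hρ hφ, h⟩

lemma abs_sub_integral_mul_div_integral_le {ν : Measure α} {w g : α → ℝ} (hw : ∀ x, 0 ≤ w x)
    (hwi : Integrable w ν) (hwgi : Integrable (fun x => w x * g x) ν) (hpos : 0 < ∫ x, w x ∂ν)
    {β : ℝ} (hg : ∀ x y, |g x - g y| ≤ β) (y : α) :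
    |g y - (∫ x, w x * g x ∂ν) / ∫ x, w x ∂ν| ≤ β := by
  have hdev : g y - (∫ x, w x * g x ∂ν) / ∫ x, w x ∂ν =
      (∫ x, w x * (g y - g x) ∂ν) / ∫ x, w x ∂ν := by
    simp only [mul_sub]
    rw [integral_sub (hwi.mul_const _) hwgi, integral_mul_const]
    field_simp
  rw [hdev, abs_div, abs_of_pos hpos, div_le_iff₀ hpos, ← integral_const_mul]
  refine abs_integral_le_integral_abs.trans (integral_mono ?_ (hwi.const_mul β) fun x => ?_)
  · exact ((hwi.mul_const (g y)).sub hwgi).abs.congr (.of_forall fun x => by simp [mul_sub])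
  · rw [abs_mul, abs_of_nonneg (hw x), mul_comm β]
    exact mul_le_mul_of_nonneg_left (hg y x) (hw x)

lemma integral_pos_of_forall_pos {ν : Measure α} [NeZero ν] {f : α → ℝ} (hf : ∀ x, 0 < f x)
    (hfi : Integrable f ν) : 0 < ∫ x, f x ∂ν := by
  rw [integral_pos_iff_support_of_nonneg (fun x => (hf x).le) hfi,
    Function.support_eq_univ fun x => (hf x).ne']
  exact Measure.measure_univ_pos.2 (NeZero.ne ν)

lemma mul_sub_sub_mul_sub_le {a b u v c S₁ S₂ β : ℝ} (ha : 0 ≤ a) (ha_le : a ≤ S₁)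
    (hab : |a - b| ≤ S₂) (huv : |u - v| ≤ β) (hvc : |v - c| ≤ β) :
    a * (u - c) - b * (v - c) ≤ β * (S₁ + S₂) := by
  have hβ : 0 ≤ β := (abs_nonneg _).trans huv
  have h₁ : a * (u - v) ≤ S₁ * β :=
    (mul_le_mul_of_nonneg_left ((le_abs_self _).trans huv) ha).trans
      (mul_le_mul_of_nonneg_right ha_le hβ)
  have h₂ : (v - c) * (a - b) ≤ β * S₂ := (le_abs_self _).trans <| by
    rw [abs_mul]; exact mul_le_mul hvc hab (abs_nonneg _) hβ
  linarith [show a * (u - c) - b * (v - c) = a * (u - v) + (v - c) * (a - b) by ring]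

lemma abs_integral_mul_div_integral_sub_le {μ ρ : Measure α} [IsProbabilityMeasure μ]
    [IsProbabilityMeasure ρ] {f g : α → ℝ} (hfm : Measurable f) (hgm : Measurable g)
    (hf_pos : ∀ x, 0 < f x) {S₁ S₂ β : ℝ} (hf_le : ∀ x, f x ≤ S₁)
    (hf_osc : ∀ x y, |f x - f y| ≤ S₂) (hg : ∀ x y, |g x - g y| ≤ β) :
    |(∫ x, f x * g x ∂μ) / (∫ x, f x ∂μ) - (∫ x, f x * g x ∂ρ) / (∫ x, f x ∂ρ)| ≤
      β * ((S₁ + S₂) / min (∫ x, f x ∂μ) (∫ x, f x ∂ρ)) * tvDist μ ρ := by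
  obtain ⟨x₀⟩ := nonempty_of_isProbabilityMeasure μ
  have hf_int : ∀ (ν : Measure α) [IsFiniteMeasure ν], Integrable f ν := fun ν _ =>
    .of_bound hfm.aestronglyMeasurable S₁
      (.of_forall fun x => by rw [Real.norm_of_nonneg (hf_pos x).le]; exact hf_le x)
  have hfg_int : ∀ (ν : Measure α) [IsFiniteMeasure ν], Integrable (fun x => f x * g x) ν :=
    fun ν _ => (hf_int ν).mul_bdd hgm.aestronglyMeasurable (c := |g x₀| + β) (.of_forall fun x => by
      rw [Real.norm_eq_abs]; linarith [abs_sub_abs_le_abs_sub (g x) (g x₀), hg x x₀])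
  have hμpos := integral_pos_of_forall_pos hf_pos (hf_int μ)
  have hρpos := integral_pos_of_forall_pos hf_pos (hf_int ρ)
  set c := (∫ x, f x * g x ∂ρ) / ∫ x, f x ∂ρ
  have hc : ∀ y, |g y - c| ≤ β := abs_sub_integral_mul_div_integral_le (fun x => (hf_pos x).le)
    (hf_int ρ) (hfg_int ρ) hρpos hg
  set φ := fun x => f x * g x - f x * c
  have hφ_int : ∀ (ν : Measure α) [IsFiniteMeasure ν],
      Integrable φ ν ∧ ∫ x, φ x ∂ν = ∫ x, f x * g x ∂ν - (∫ x, f x ∂ν) * c := fun ν _ =>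
    ⟨(hfg_int ν).sub ((hf_int ν).mul_const c),
      by rw [integral_sub (hfg_int ν) ((hf_int ν).mul_const c), integral_mul_const]⟩
  have hφ_osc : ∀ x y, φ x - φ y ≤ β * (S₁ + S₂) := fun x y => by
    simpa only [φ, mul_sub] using
      mul_sub_sub_mul_sub_le (hf_pos x).le (hf_le x) (hf_osc x y) (hg x y) (hc y)
  have hdiff : (∫ x, f x * g x ∂μ) / (∫ x, f x ∂μ) - c =
      (∫ x, φ x ∂μ - ∫ x, φ x ∂ρ) / ∫ x, f x ∂μ := by
    have hcρ : (∫ x, f x ∂ρ) * c = ∫ x, f x * g x ∂ρ := mul_div_cancel₀ _ hρpos.ne'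
    rw [(hφ_int μ).2, (hφ_int ρ).2, hcρ, sub_self, sub_zero, sub_div,
      mul_div_cancel_left₀ _ hμpos.ne']
  have hβ : 0 ≤ β := (abs_nonneg _).trans (hg x₀ x₀)
  have hS : 0 ≤ S₁ + S₂ :=
    add_nonneg ((hf_pos x₀).le.trans (hf_le x₀)) ((abs_nonneg _).trans (hf_osc x₀ x₀))
  rw [hdiff, abs_div, abs_of_pos hμpos]
  calc |∫ x, φ x ∂μ - ∫ x, φ x ∂ρ| / ∫ x, f x ∂μ
      ≤ β * (S₁ + S₂) * tvDist μ ρ / min (∫ x, f x ∂μ) (∫ x, f x ∂ρ) := by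
        refine div_le_div₀ (mul_nonneg (mul_nonneg hβ hS) (tvDist_nonneg μ ρ)) ?_
          (lt_min hμpos hρpos) (min_le_left _ _)
        exact abs_integral_sub_integral_le_mul_tvDist (hφ_int μ).1 (hφ_int ρ).1 hφ_osc
    _ = β * ((S₁ + S₂) / min (∫ x, f x ∂μ) (∫ x, f x ∂ρ)) * tvDist μ ρ := by ring

end

section

variable {E F : Type*} [MeasurableSpace E] [MeasurableSpace F]

lemma toReal_inv_smul_apply (m : Measure F) (c : ENNReal) (A : Set F) :
    ((c⁻¹ • m) A).toReal = (m A).toReal / c.toReal := by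
  rw [Measure.smul_apply, smul_eq_mul, ENNReal.toReal_mul, ENNReal.toReal_inv, inv_mul_eq_div]

lemma ProbabilityTheory.Kernel.integral_toReal_apply (Q : Kernel E F) [IsFiniteKernel Q]
    (ν : Measure E) {A : Set F} (hA : MeasurableSet A) :
    ∫ x, (Q x A).toReal ∂ν = (∫⁻ x, Q x A ∂ν).toReal :=
  integral_toReal (Q.measurable_coe hA).aemeasurable (.of_forall fun _ => measure_lt_top _ _)

lemma toReal_inv_lintegral_smul_bind_apply (Q : Kernel E F) [IsFiniteKernel Q] (ν : Measure E)
    {A : Set F} (hA : MeasurableSet A) :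
    (((∫⁻ x, Q x .univ ∂ν)⁻¹ • ν.bind (fun x => Q x)) A).toReal =
      (∫ x, (Q x A).toReal ∂ν) / ∫ x, (Q x .univ).toReal ∂ν := by
  rw [toReal_inv_smul_apply, Measure.bind_apply hA Q.measurable.aemeasurable,
    Q.integral_toReal_apply ν hA, Q.integral_toReal_apply ν .univ]

end

theorem normalized_update_tv_bound_general
    {E F : Type*} [MeasurableSpace E] [MeasurableSpace F]
    (Q : Kernel E F) [IsFiniteKernel Q]
    (hQpos : ∀ x, 0 < Q x Set.univ)
    (μ ρ : Measure E) [IsProbabilityMeasure μ] [IsProbabilityMeasure ρ] :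
    tvDist ((∫⁻ x, Q x Set.univ ∂μ)⁻¹ • μ.bind (fun x => Q x))
        ((∫⁻ x, Q x Set.univ ∂ρ)⁻¹ • ρ.bind (fun x => Q x)) ≤
      (⨆ p : E × E, tvDist ((Q p.1 Set.univ)⁻¹ • Q p.1) ((Q p.2 Set.univ)⁻¹ • Q p.2)) *
        (((⨆ x, |(Q x Set.univ).toReal|) +
            ⨆ p : E × E, |(Q p.1 Set.univ).toReal - (Q p.2 Set.univ).toReal|) /
          min (∫ x, (Q x Set.univ).toReal ∂μ) (∫ x, (Q x Set.univ).toReal ∂ρ)) *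
        tvDist μ ρ := by
  have : ∀ x, NeZero (Q x) := fun x => ⟨Measure.measure_univ_pos.1 (hQpos x)⟩
  set f : E → ℝ := fun x => (Q x .univ).toReal
  have hf_pos : ∀ x, 0 < f x := fun x => ENNReal.toReal_pos (hQpos x).ne' (measure_ne_top _ _)
  have hf_bound : ∀ x, |f x| ≤ Q.bound.toReal := fun x => by
    rw [abs_of_pos (hf_pos x)]; exact ENNReal.toReal_mono Q.bound_ne_top (Q.measure_le_bound x _)
  have hS₁ : ∀ x, f x ≤ ⨆ x, |f x| := fun x =>
    (le_abs_self _).trans (le_ciSup ⟨_, Set.forall_mem_range.2 hf_bound⟩ x)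
  have hS₂ : ∀ x y, |f x - f y| ≤ ⨆ p : E × E, |f p.1 - f p.2| := fun x y =>
    le_ciSup (f := fun p : E × E => |f p.1 - f p.2|) ⟨_, Set.forall_mem_range.2 fun p =>
      (abs_sub _ _).trans (add_le_add (hf_bound p.1) (hf_bound p.2))⟩ (x, y)
  refine tvDist_le fun A hA => ?_
  set g : E → ℝ := fun x => (Q x A).toReal / f x
  have hfg : ∀ x, (Q x A).toReal = f x * g x := fun x => (mul_div_cancel₀ _ (hf_pos x).ne').symm
  have hβ : ∀ x y, |g x - g y| ≤
      ⨆ p : E × E, tvDist ((Q p.1 Set.univ)⁻¹ • Q p.1) ((Q p.2 Set.univ)⁻¹ • Q p.2) :=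
    fun x y => by
      simpa only [toReal_inv_smul_apply] using
        abs_sub_le_iSup_tvDist (fun x => (Q x .univ)⁻¹ • Q x) hA x y
  rw [toReal_inv_lintegral_smul_bind_apply Q μ hA, toReal_inv_lintegral_smul_bind_apply Q ρ hA]
  simp only [hfg]
  exact abs_integral_mul_div_integral_sub_le (Q.measurable_coe .univ).ennreal_toReal
    ((Q.measurable_coe hA).ennreal_toReal.div (Q.measurable_coe .univ).ennreal_toReal)
    hf_pos hS₁ hS₂ hβ

/-- Dobrushin-type stability of the normalized update `μ ↦ μQ/μ(Q(1))` of a nonnegative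
kernel `Q` with bounded mass ratio: letting `P(x,·) = Q(x,·)/Q(1)(x)`,
`‖μQ/μ(Q(1)) − ρQ/ρ(Q(1))‖_tv ≤ β(P)·(osc(Q(1))/(μ(Q(1)) ∧ ρ(Q(1))))·‖μ−ρ‖_tv`. -/
theorem normalized_update_tv_bound
    {E F : Type*} [MeasurableSpace E] [MeasurableSpace F] [Nonempty E]
    (Q : Kernel E F) [IsFiniteKernel Q]
    (hQpos : ∀ x, 0 < Q x Set.univ)
    (κ : ℝ) (hκ : 1 ≤ κ)
    (hratio : ∀ x y : E, (Q x Set.univ).toReal ≤ κ * (Q y Set.univ).toReal)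
    (μ ρ : Measure E) [IsProbabilityMeasure μ] [IsProbabilityMeasure ρ] :
    tvDist ((∫⁻ x, Q x Set.univ ∂μ)⁻¹ • μ.bind (fun x => Q x))
        ((∫⁻ x, Q x Set.univ ∂ρ)⁻¹ • ρ.bind (fun x => Q x)) ≤
      (⨆ p : E × E, tvDist ((Q p.1 Set.univ)⁻¹ • Q p.1) ((Q p.2 Set.univ)⁻¹ • Q p.2)) *
        (((⨆ x, |(Q x Set.univ).toReal|) +
            ⨆ p : E × E, |(Q p.1 Set.univ).toReal - (Q p.2 Set.univ).toReal|) /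
          min (∫ x, (Q x Set.univ).toReal ∂μ) (∫ x, (Q x Set.univ).toReal ∂ρ)) *
        tvDist μ ρ :=
  normalized_update_tv_bound_general Q hQpos μ ρ
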